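/- arXiv:2408.08646 — 10 statements merged into one kernel-verified Lean document; each statement's English description precedes it below -/
import Mathlib

section
/- Let f : X × U → X be a function. Define A_f = {(x,y) ∈ X² : ∃ u, y = f(x,u)} and U_f = {(x,y) ∈ A_f : ∃! u, y = f(x,u)}, and for (x,y) ∈ U_f let σ(x,y) be the unique u with y = f(x,u). Assume A_f is symmetric and A_f \ U_f is contained in the diagonal of X². Define R_f = {(x,u) : (x, f(x,u)) ∈ U_f} and g_f(x,u) = σ(f(x,u), x) if (x,u) ∈ R_f, and g_f(x,u) = u otherwise. Then the map H(x,u) = (f(x,u), g_f(x,u)) is an involution on X × U, i.e. H(H(x,u)) = (x,u) for all (x,u). -/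
/-! Off the diagonal every pair of `A_f` lies in `U_f`, and `A_f` is symmetric, so `(x, y) ∈ U_f`
forces `(y, x) ∈ U_f`: then `H` sends `(x, u)` to `(y, σ(y, x))` and back to `(x, σ(x, y)) = (x, u)`.
Outside `R_f` the pair `(x, f(x,u))` lies on the diagonal, so `H` fixes `(x, u)`. -/

section InvolutiveAugmentation

variable {X U : Type*} (f : X → U → X)

theorem existsUnique_swap_of_symm_of_diag
    (hsymm : ∀ x y : X, (∃ u, y = f x u) → (∃ u, x = f y u))
    (hdiag : ∀ x y : X, (∃ u, y = f x u) → ¬ (∃! u, y = f x u) → x = y)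
    {x y : X} (hxy : ∃! u, y = f x u) : ∃! v, x = f y v := by
  by_contra hyx
  obtain rfl := hdiag y x (hsymm x y hxy.exists) hyx
  exact hyx hxy

theorem apply_sigma_eq_of_existsUnique (σ : X → X → U)
    (hσ : ∀ x y u, (∃! w, y = f x w) → (y = f x u ↔ σ x y = u))
    {x y : X} (hxy : ∃! u, y = f x u) : f x (σ x y) = y :=
  ((hσ x y _ hxy).mpr rfl).symm

end InvolutiveAugmentation

open Classical in

/-- involutive augmentation `H = (f, g_f)` is an involution. -/
theorem involutive_augmentation_is_involution {X U : Type*} (f : X → U → X)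
    (σ : X → X → U)
    (hσ : ∀ x y u, (∃! w, y = f x w) → (y = f x u ↔ σ x y = u))
    (hsymm : ∀ x y : X, (∃ u, y = f x u) → (∃ u, x = f y u))
    (hdiag : ∀ x y : X, (∃ u, y = f x u) → ¬ (∃! u, y = f x u) → x = y)
    (g : X → U → U)
    (hg : ∀ x u, g x u = if (∃! w, f x u = f x w) then σ (f x u) x else u) :
    ∀ x u, f (f x u) (g x u) = x ∧ g (f x u) (g x u) = u := by
  intro x u
  set y := f x u with hy
  by_cases hxy : ∃! w, y = f x w
  · have hgxu : g x u = σ y x := by rw [hg, if_pos hxy]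
    have hyx := existsUnique_swap_of_symm_of_diag f hsymm hdiag hxy
    have hfyx := apply_sigma_eq_of_existsUnique f σ hσ hyx
    refine ⟨hgxu ▸ hfyx, ?_⟩
    have hback : ∃! w, f y (σ y x) = f y w := by rwa [hfyx]
    rw [hgxu, hg, if_pos hback, hfyx]
    exact (hσ x y u hxy).mp hy
  · have hgxu : g x u = u := by rw [hg, if_neg hxy]
    obtain hx : x = y := hdiag x y ⟨u, hy⟩ hxy
    rw [hgxu, ← hx, ← hy, ← hx, hgxu]
    exact ⟨rfl, rfl⟩
end

section
/- Under the hypotheses of the involutive augmentation construction (A_f symmetric and A_f \ U_f contained in the diagonal), if (f,g) is any involution on X × U whose first component is f, then g agrees with g_f on R_f = {(x,u) : (x, f(x,u)) ∈ U_f}. -/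
/-- any involution `(f, g)` agrees with `g_f` on `R_f`. -/
theorem involution_agrees_with_gf {X U : Type*} (f : X → U → X)
    (σ : X → X → U)
    (hσ : ∀ x y u, (∃! w, y = f x w) → (y = f x u ↔ σ x y = u))
    (hsymm : ∀ x y : X, (∃ u, y = f x u) → (∃ u, x = f y u))
    (hdiag : ∀ x y : X, (∃ u, y = f x u) → ¬ (∃! u, y = f x u) → x = y)
    (g : X → U → U)
    (hinv : ∀ x u, f (f x u) (g x u) = x ∧ g (f x u) (g x u) = u) :
    ∀ x u, (∃! w, f x u = f x w) → g x u = σ (f x u) x := by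
  intro x u hu
  have hex : ∃ w, x = f (f x u) w := ⟨g x u, (hinv x u).1.symm⟩
  have huniq : ∃! w, x = f (f x u) w := by
    by_contra hnu
    have heq : f x u = x := hdiag (f x u) x hex hnu
    exact hnu (by rw [heq]; simpa [heq] using hu)
  exact ((hσ (f x u) x (g x u) huniq).mp (hinv x u).1.symm).symm
end

section
/- The swapped Matsumoto–Yor map H̃(x,u) = (1/u − 1/(x+u), 1/(x+u)) is an involution on ℝ₊², and it is the unique involution on ℝ₊² with first component f̃(x,u) = 1/u − 1/(x+u). -/
/-!
Writing `s = x + u`, the first component of `H̃(x,u)` plus the second is `1/u`, so applying `H̃`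
twice returns `(s - u, u)`. For uniqueness only the first coordinate of the involution identity
is needed: for fixed `c > 0` the map `t ↦ 1/t - 1/(c + t) = c / (t (c + t))` is strictly
decreasing on `ℝ₊`, so the equation `1/t - 1/(f̃(x,u) + t) = x` has at most one positive
solution, and `t = 1/(x+u)` is one.
-/

open Set

noncomputable def swappedMatsumotoYor (p : ℝ × ℝ) : ℝ × ℝ :=
  (1 / p.2 - 1 / (p.1 + p.2), 1 / (p.1 + p.2))

-- Junk values make this hold on all of `ℝ²`, not only on the positive quadrant.
theorem swappedMatsumotoYor_involutive : Function.Involutive swappedMatsumotoYor := by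
  rintro ⟨x, u⟩
  simp [swappedMatsumotoYor]

theorem strictAntiOn_one_div_sub_one_div_add {c : ℝ} (hc : 0 < c) :
    StrictAntiOn (fun t : ℝ => 1 / t - 1 / (c + t)) (Ioi 0) := by
  intro s (hs : 0 < s) t (ht : 0 < t) hst
  have key : ∀ r : ℝ, 0 < r → 1 / r - 1 / (c + r) = c / (r * (c + r)) := by
    intro r hr
    field_simp
    ring
  simp only [key s hs, key t ht]
  gcongr

theorem one_div_sub_one_div_add_pos {x u : ℝ} (hx : 0 < x) (hu : 0 < u) :
    0 < 1 / u - 1 / (x + u) :=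
  sub_pos.mpr (one_div_lt_one_div_of_lt hu (lt_add_of_pos_left u hx))

/-- the swapped Matsumoto–Yor map `H̃(x,u) = (1/u - 1/(x+u), 1/(x+u))`
is an involution on the positive quadrant, and it is the unique involution there with
first component `f̃(x,u) = 1/u - 1/(x+u)`. -/
theorem swapped_matsumoto_yor_involution_and_unique :
    (∀ x u : ℝ, 0 < x → 0 < u →
      (fun p : ℝ × ℝ => (1 / p.2 - 1 / (p.1 + p.2), 1 / (p.1 + p.2)))
        ((fun p : ℝ × ℝ => (1 / p.2 - 1 / (p.1 + p.2), 1 / (p.1 + p.2))) (x, u)) = (x, u)) ∧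
    (∀ g : ℝ → ℝ → ℝ,
      (∀ x u : ℝ, 0 < x → 0 < u → 0 < g x u) →
      (∀ x u : ℝ, 0 < x → 0 < u →
        (1 / g x u - 1 / ((1 / u - 1 / (x + u)) + g x u) = x ∧
          g (1 / u - 1 / (x + u)) (g x u) = u)) →
      ∀ x u : ℝ, 0 < x → 0 < u → g x u = 1 / (x + u)) := by
  refine ⟨fun x u _ _ => swappedMatsumotoYor_involutive (x, u), ?_⟩
  intro g hpos hinv x u hx hu
  have hsol : 1 / (1 / (x + u)) - 1 / ((1 / u - 1 / (x + u)) + 1 / (x + u)) = x :=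
    congrArg Prod.fst (swappedMatsumotoYor_involutive (x, u))
  refine (strictAntiOn_one_div_sub_one_div_add (one_div_sub_one_div_add_pos hx hu)).injOn
    (hpos x u hx hu) (by positivity : 0 < 1 / (x + u)) ?_
  simp only [(hinv x u hx hu).1, hsol]
end

section
/- Let H = (f, g) be a measurable involution on a product measurable space X × U, and suppose H preserves a product probability measure μ ⊗ ν. Then for X ∼ μ and U ∼ ν independent, the pair (X, f(X,U)) has the same distribution as (f(X,U), X); in particular the kernel K(x,·) = law of f(x,U) is μ-reversible. -/
open MeasureTheory

/-- a measurable involution preserving a product probability measure yields a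
reversible kernel: `(X, f(X,U))` has the same law as `(f(X,U), X)`. -/
theorem involution_preserving_product_gives_reversibility
    {X U : Type*} [MeasurableSpace X] [MeasurableSpace U]
    (μ : Measure X) (ν : Measure U) [IsProbabilityMeasure μ] [IsProbabilityMeasure ν]
    (H : X × U → X × U) (hHmeas : Measurable H)
    (hHinv : ∀ p, H (H p) = p)
    (hHpres : Measure.map H (μ.prod ν) = μ.prod ν) :
    Measure.map (fun p : X × U => (p.1, (H p).1)) (μ.prod ν) =
      Measure.map (fun p : X × U => ((H p).1, p.1)) (μ.prod ν) := by
  conv_rhs => rw [← hHpres]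
  rw [Measure.map_map (by exact (hHmeas.fst.prodMk measurable_fst)) hHmeas]
  congr 1
  funext p
  simp [Function.comp, hHinv p]
end

section
/- For f : ℤ × ℤ → ℤ defined by f(x,u) = u − (x+u)⁺ = min(u, −x), the map H₁(x,u) = (min(u,−x), x + (x+u)⁺) is an involution on ℤ², where t⁺ = max(t,0). -/
/-- the ultra-discrete KdV map `H₁(x,u) = (min(u,-x), x + (x+u)⁺)`
is an involution on `ℤ²`. -/
theorem ultra_discrete_kdv_involution
    (H : ℤ × ℤ → ℤ × ℤ)
    (hH : ∀ p : ℤ × ℤ, H p = (min p.2 (-p.1), p.1 + max (p.1 + p.2) 0)) :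
    ∀ x u : ℤ, H (H (x, u)) = (x, u) := by
  intro x u
  simp only [hH]
  simp only [Prod.mk.injEq]
  constructor <;> rcases le_total u (-x) with h | h <;>
    simp [min_def, max_def] <;> omega
end

section
/- Let h(n) = n − (−1)ⁿ + 1_{n=0} for n ∈ ℕ₀ (i.e. h swaps 2k+1 ↔ 2k+2 for k ≥ 0 and fixes 0). Then h is an involution on the non-negative integers, and the map H₂(x,u) = (min(u,−x), x + h((x+u)⁺)) is an involution on ℤ². -/
/-- `h(n) = n - (-1)^n + 1_{n=0}` is an involution on the non-negative
integers, and `H₂(x,u) = (min(u,-x), x + h((x+u)⁺))` is an involution on `ℤ²`. -/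
theorem kdv_modified_involution
    (h : ℤ → ℤ)
    (hh : ∀ n : ℤ, 0 ≤ n → h n = n - (-1) ^ n.toNat + (if n = 0 then 1 else 0)) :
    (∀ n : ℤ, 0 ≤ n → 0 ≤ h n ∧ h (h n) = n) ∧
    ∀ x u : ℤ,
      (min (x + h (max (x + u) 0)) (-(min u (-x))) = x ∧
        min u (-x) + h (max (min u (-x) + (x + h (max (x + u) 0))) 0) = u) := by
  have h0 : h 0 = 0 := by simpa using hh 0 le_rfl
  have key : ∀ n : ℤ, 0 ≤ n → 0 ≤ h n ∧ h (h n) = n := by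
    intro n hn
    by_cases hz : n = 0
    · simp [hz, h0]
    · rcases Int.even_or_odd n with he | ho
      · obtain ⟨k, hk⟩ := he
        have hn2 : 2 ≤ n := by omega
        have hev : (-1:ℤ) ^ n.toNat = 1 := by
          have : Even n.toNat := by
            rw [← Int.even_coe_nat, Int.toNat_of_nonneg hn]
            exact ⟨k, hk⟩
          exact this.neg_one_pow
        have e1 : h n = n - 1 := by rw [hh n hn, if_neg hz, hev]; ring
        have hod : (-1:ℤ) ^ (n-1).toNat = -1 := by
          have : Odd (n-1).toNat := by
            rw [← Int.odd_coe_nat, Int.toNat_of_nonneg (by omega : (0:ℤ) ≤ n - 1)]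
            exact ⟨k - 1, by omega⟩
          exact this.neg_one_pow
        have e2 : h (n-1) = n := by
          have hne : n - 1 ≠ 0 := by omega
          rw [hh (n-1) (by omega), if_neg hne, hod]; ring
        refine ⟨by omega, by rw [e1, e2]⟩
      · obtain ⟨k, hk⟩ := ho
        have hod : (-1:ℤ) ^ n.toNat = -1 := by
          have : Odd n.toNat := by
            rw [← Int.odd_coe_nat, Int.toNat_of_nonneg hn]
            exact ⟨k, hk⟩
          exact this.neg_one_pow
        have e1 : h n = n + 1 := by rw [hh n hn, if_neg hz, hod]; ring
        have hev : (-1:ℤ) ^ (n+1).toNat = 1 := by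
          have : Even (n+1).toNat := by
            rw [← Int.even_coe_nat, Int.toNat_of_nonneg (by omega : (0:ℤ) ≤ n + 1)]
            exact ⟨k + 1, by omega⟩
          exact this.neg_one_pow
        have e2 : h (n+1) = n := by
          have hne : n + 1 ≠ 0 := by omega
          rw [hh (n+1) (by omega), if_neg hne, hev]; ring
        refine ⟨by omega, by rw [e1, e2]⟩
  refine ⟨key, ?_⟩
  intro x u
  by_cases hs : x + u ≤ 0
  · have hmax : max (x + u) 0 = 0 := by omega
    have hmin : min u (-x) = u := by omega
    rw [hmax, h0, hmin]
    constructor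
    · omega
    · rw [show max (u + (x + 0)) 0 = 0 from by omega, h0]
      omega
  · have hmax : max (x + u) 0 = x + u := by omega
    obtain ⟨hpos, hinv⟩ := key (x + u) (by omega)
    have hne : h (x + u) ≠ 0 := by
      intro hc
      have : h (h (x + u)) = 0 := by rw [hc, h0]
      omega
    have hmin : min u (-x) = -x := by omega
    rw [hmax, hmin]
    constructor
    · rw [neg_neg]
      exact min_eq_right (by omega)
    · rw [show -x + (x + h (x + u)) = h (x + u) from by ring,
        max_eq_left hpos, hinv]
      ring
end

section
/- Let f(x,u) = min(u, −x) on ℤ². A map g : ℤ² → ℤ makes (f,g) an involution on ℤ² if and only if g(x,u) = x whenever x + u < 0, and g(x,u) = x + s(x,u) whenever x + u ≥ 0, where s is a non-negative integer valued function on {(x,u) : x+u ≥ 0} satisfying s(−x, x + s(x,u)) = x + u for all such (x,u). -/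
/-- characterization of the functions `g` making `(f, g)` an involution on
`ℤ²`, where `f(x,u) = min(u, -x)`. -/
theorem kdv_involution_characterization (g : ℤ → ℤ → ℤ) :
    (∀ x u : ℤ,
        min (g x u) (-(min u (-x))) = x ∧ g (min u (-x)) (g x u) = u) ↔
    (∃ s : ℤ → ℤ → ℤ,
      (∀ x u : ℤ, 0 ≤ x + u → 0 ≤ s x u ∧ s (-x) (x + s x u) = x + u) ∧
      (∀ x u : ℤ, x + u < 0 → g x u = x) ∧
      (∀ x u : ℤ, 0 ≤ x + u → g x u = x + s x u)) := by
  constructor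
  · intro h
    refine ⟨fun x u => g x u - x, ?_, ?_, ?_⟩
    · intro x u hxu
      obtain ⟨h1, h2⟩ := h x u
      have hmin : min u (-x) = -x := by omega
      rw [hmin] at h1 h2
      have hg : x + (g x u - x) = g x u := by omega
      dsimp only
      constructor
      · omega
      · simp only [hg, h2]
        omega
    · intro x u hxu
      obtain ⟨h1, _⟩ := h x u
      have hmin : min u (-x) = u := by omega
      rw [hmin] at h1
      omega
    · intro x u hxu
      obtain ⟨h1, _⟩ := h x u
      have hmin : min u (-x) = -x := by omega
      rw [hmin] at h1
      dsimp only
      omega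
  · rintro ⟨s, hs, hneg, hpos⟩ x u
    by_cases hxu : 0 ≤ x + u
    · have hmin : min u (-x) = -x := by omega
      have hg : g x u = x + s x u := hpos x u hxu
      obtain ⟨hs1, hs2⟩ := hs x u hxu
      have hg2 : g (-x) (x + s x u) = -x + s (-x) (x + s x u) :=
        hpos (-x) (x + s x u) (by omega)
      rw [hmin, hg, hg2, hs2]
      constructor <;> omega
    · have hmin : min u (-x) = u := by omega
      have hg : g x u = x := hneg x u (by omega)
      have hg2 : g u x = u := hneg u x (by omega)
      rw [hmin, hg, hg2]
      constructor <;> omega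
end

section
/- Let 0 < p < q with p + q < 1, r = 1−p−q, θ = p/q. Let X be geometric on ℕ₀ with parameter θ (P(X = k) = (1−θ)θᵏ) and let U be independent with P(U=1)=p, P(U=0)=r, P(U=−1)=q. Set Y = (X+U)⁺ and V = −U − 2(X+U)⁻. Then (Y,V) has the same joint distribution as (X,U); in particular Y and V are independent, Y is geometric(θ), and V is distributed as U. -/
open MeasureTheory ProbabilityTheory

lemma burke_pt (x u y v : ℤ) (hx : 0 ≤ x) (hu : u = -1 ∨ u = 0 ∨ u = 1) :
    (max (x + u) 0 = y ∧ -u - 2 * max (-(x + u)) 0 = v) ↔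
      (v = 1 ∧ u = -1 ∧ x = y + 1 ∧ 0 ≤ y) ∨
      (v = 0 ∧ u = 0 ∧ x = y) ∨
      (v = -1 ∧ u = 1 ∧ x = y - 1 ∧ 1 ≤ y) ∨
      (v = -1 ∧ u = -1 ∧ x = 0 ∧ y = 0) := by
  rcases hu with rfl | rfl | rfl <;>
    simp only [max_def] <;> split_ifs <;>
    simp only [true_and, false_and, and_true, and_false, or_false, false_or,
      iff_false, iff_true, not_and, not_or, neg_neg] <;> omega

/-- for `X` geometric(p/q) and `U` independent with values in `{-1,0,1}`
and `P(U=1)=p`, `P(U=0)=r`, `P(U=-1)=q`, the pair `(Y,V) = ((X+U)⁺, -U-2(X+U)⁻)` has the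
same joint law as `(X,U)`; in particular `Y` and `V` are independent, `Y ~ X`, `V ~ U`. -/
theorem reflecting_walk_burke
    {Ω : Type*} [MeasurableSpace Ω] (P : Measure Ω) [IsProbabilityMeasure P]
    (p q : ℝ) (hp : 0 < p) (hlt : p < q) (hpq : p + q < 1)
    (X U : Ω → ℤ) (hXm : Measurable X) (hUm : Measurable U)
    (hindep : IndepFun X U P)
    (hXnn : ∀ ω, 0 ≤ X ω)
    (hXd : ∀ k : ℕ, (P {ω | X ω = (k : ℤ)}).toReal = (1 - p / q) * (p / q) ^ k)
    (hUrange : ∀ ω, U ω ∈ ({-1, 0, 1} : Set ℤ))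
    (hU1 : (P {ω | U ω = 1}).toReal = p)
    (hU0 : (P {ω | U ω = 0}).toReal = 1 - p - q)
    (hUm1 : (P {ω | U ω = -1}).toReal = q) :
    Measure.map
        (fun ω => (max (X ω + U ω) 0, -U ω - 2 * max (-(X ω + U ω)) 0)) P =
      Measure.map (fun ω => (X ω, U ω)) P ∧
    IndepFun (fun ω => max (X ω + U ω) 0)
        (fun ω => -U ω - 2 * max (-(X ω + U ω)) 0) P ∧
    Measure.map (fun ω => max (X ω + U ω) 0) P = Measure.map X P ∧
    Measure.map (fun ω => -U ω - 2 * max (-(X ω + U ω)) 0) P = Measure.map U P := by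
  have hq : 0 < q := hp.trans hlt
  set Y : Ω → ℤ := fun ω => max (X ω + U ω) 0 with hYdef
  set V : Ω → ℤ := fun ω => -U ω - 2 * max (-(X ω + U ω)) 0 with hVdef
  have hYm : Measurable Y := ((hXm.add hUm).max measurable_const)
  have hVm : Measurable V := by
    have : Measurable fun ω => max (-(X ω + U ω)) 0 :=
      ((hXm.add hUm).neg.max measurable_const)
    exact (hUm.neg.sub (this.const_mul 2))
  -- preimage-singleton measures
  have hXset : ∀ y : ℤ, X ⁻¹' {y} = {ω | X ω = y} := fun y => rfl
  have hUset : ∀ v : ℤ, U ⁻¹' {v} = {ω | U ω = v} := fun v => rfl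
  have hXempty : ∀ y : ℤ, y < 0 → X ⁻¹' {y} = ∅ := by
    intro y hy
    ext ω; simp only [Set.mem_preimage, Set.mem_singleton_iff, Set.mem_empty_iff_false,
      iff_false]
    intro h; have := hXnn ω; omega
  have hUempty : ∀ v : ℤ, v ≠ -1 → v ≠ 0 → v ≠ 1 → U ⁻¹' {v} = ∅ := by
    intro v h1 h2 h3
    ext ω; simp only [Set.mem_preimage, Set.mem_singleton_iff, Set.mem_empty_iff_false,
      iff_false]
    intro h; have := hUrange ω; simp [Set.mem_insert_iff] at this; rcases this with h'|h'|h' <;>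
      simp [h] at h' <;> tauto
  -- key numeric facts in ℝ≥0∞
  have hmulkey1 : ∀ n : ℕ, P (X ⁻¹' {((n : ℤ) + 1)}) * P (U ⁻¹' {-1}) =
      P (X ⁻¹' {(n : ℤ)}) * P (U ⁻¹' {1}) := by
    intro n
    have h1 : P (X ⁻¹' {((n : ℤ) + 1)}) * P (U ⁻¹' {-1}) ≠ ⊤ :=
      ENNReal.mul_ne_top (measure_ne_top _ _) (measure_ne_top _ _)
    have h2 : P (X ⁻¹' {(n : ℤ)}) * P (U ⁻¹' {1}) ≠ ⊤ :=
      ENNReal.mul_ne_top (measure_ne_top _ _) (measure_ne_top _ _)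
    rw [← ENNReal.toReal_eq_toReal_iff' h1 h2, ENNReal.toReal_mul, ENNReal.toReal_mul]
    have hcast : ((n : ℤ) + 1) = ((n + 1 : ℕ) : ℤ) := by push_cast; ring
    rw [hcast, hXset, hXset, hUset, hUset, hXd, hXd, hU1, hUm1]
    have hq' : q ≠ 0 := ne_of_gt hq
    rw [pow_succ]
    field_simp
  have hmulkey2 : ∀ n : ℕ, 1 ≤ n → P (X ⁻¹' {((n : ℤ) - 1)}) * P (U ⁻¹' {1}) =
      P (X ⁻¹' {(n : ℤ)}) * P (U ⁻¹' {-1}) := by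
    intro n hn
    obtain ⟨m, rfl⟩ : ∃ m, n = m + 1 := ⟨n - 1, by omega⟩
    have h1 : P (X ⁻¹' {((m + 1 : ℕ) : ℤ) - 1}) * P (U ⁻¹' {1}) ≠ ⊤ :=
      ENNReal.mul_ne_top (measure_ne_top _ _) (measure_ne_top _ _)
    have h2 : P (X ⁻¹' {((m + 1 : ℕ) : ℤ)}) * P (U ⁻¹' {-1}) ≠ ⊤ :=
      ENNReal.mul_ne_top (measure_ne_top _ _) (measure_ne_top _ _)
    rw [← ENNReal.toReal_eq_toReal_iff' h1 h2, ENNReal.toReal_mul, ENNReal.toReal_mul]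
    have hcast : ((m + 1 : ℕ) : ℤ) - 1 = ((m : ℕ) : ℤ) := by push_cast; ring
    rw [hcast, hXset, hXset, hUset, hUset, hXd, hXd, hU1, hUm1]
    have hq' : q ≠ 0 := ne_of_gt hq
    rw [pow_succ]
    field_simp
  -- independence on preimages of singletons
  have hprod : ∀ y v : ℤ, P (X ⁻¹' {y} ∩ U ⁻¹' {v}) = P (X ⁻¹' {y}) * P (U ⁻¹' {v}) :=
    fun y v => hindep.measure_inter_preimage_eq_mul _ _
      (measurableSet_singleton y) (measurableSet_singleton v)
  -- the key singleton computation
  have hpairm : Measurable fun ω => (Y ω, V ω) := hYm.prodMk hVm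
  have hXUm : Measurable fun ω => (X ω, U ω) := hXm.prodMk hUm
  have hmap : Measure.map (fun ω => (Y ω, V ω)) P = Measure.map (fun ω => (X ω, U ω)) P := by
    rw [Measure.ext_iff_singleton]
    rintro ⟨y, v⟩
    rw [Measure.map_apply hpairm (measurableSet_singleton _),
      Measure.map_apply hXUm (measurableSet_singleton _)]
    have hXU : (fun ω => (X ω, U ω)) ⁻¹' {(y, v)} = X ⁻¹' {y} ∩ U ⁻¹' {v} := by
      ext ω; simp [Prod.ext_iff]
    rw [hXU, hprod]
    have hYV : (fun ω => (Y ω, V ω)) ⁻¹' {(y, v)} =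
        {ω | (v = 1 ∧ U ω = -1 ∧ X ω = y + 1 ∧ 0 ≤ y) ∨
          (v = 0 ∧ U ω = 0 ∧ X ω = y) ∨
          (v = -1 ∧ U ω = 1 ∧ X ω = y - 1 ∧ 1 ≤ y) ∨
          (v = -1 ∧ U ω = -1 ∧ X ω = 0 ∧ y = 0)} := by
      ext ω
      have hu : U ω = -1 ∨ U ω = 0 ∨ U ω = 1 := by
        have := hUrange ω; simpa [Set.mem_insert_iff] using this
      simp only [Set.mem_preimage, Set.mem_singleton_iff, Prod.ext_iff, Set.mem_setOf_eq,
        hYdef, hVdef]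
      exact burke_pt (X ω) (U ω) y v (hXnn ω) hu
    rw [hYV]
    by_cases hv1 : v = 1
    · subst hv1
      by_cases hy : 0 ≤ y
      · obtain ⟨n, rfl⟩ : ∃ n : ℕ, y = (n : ℤ) := ⟨y.toNat, by omega⟩
        have : {ω | ((1:ℤ) = 1 ∧ U ω = -1 ∧ X ω = (n:ℤ) + 1 ∧ 0 ≤ (n:ℤ)) ∨
            ((1:ℤ) = 0 ∧ U ω = 0 ∧ X ω = (n:ℤ)) ∨
            ((1:ℤ) = -1 ∧ U ω = 1 ∧ X ω = (n:ℤ) - 1 ∧ 1 ≤ (n:ℤ)) ∨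
            ((1:ℤ) = -1 ∧ U ω = -1 ∧ X ω = 0 ∧ (n:ℤ) = 0)} =
            X ⁻¹' {((n:ℤ) + 1)} ∩ U ⁻¹' {-1} := by
          ext ω; simp only [Set.mem_setOf_eq, Set.mem_inter_iff, Set.mem_preimage,
            Set.mem_singleton_iff]
          constructor
          · rintro (⟨_, h1, h2, _⟩ | ⟨h, _⟩ | ⟨h, _⟩ | ⟨h, _⟩) <;> first | exact ⟨h2, h1⟩ | omega
          · rintro ⟨h1, h2⟩; exact Or.inl ⟨trivial, h2, h1, by positivity⟩
        rw [this, hprod, hmulkey1]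
      · have h1 : {ω | ((1:ℤ) = 1 ∧ U ω = -1 ∧ X ω = y + 1 ∧ 0 ≤ y) ∨
            ((1:ℤ) = 0 ∧ U ω = 0 ∧ X ω = y) ∨
            ((1:ℤ) = -1 ∧ U ω = 1 ∧ X ω = y - 1 ∧ 1 ≤ y) ∨
            ((1:ℤ) = -1 ∧ U ω = -1 ∧ X ω = 0 ∧ y = 0)} = (∅ : Set Ω) := by
          ext ω; simp only [Set.mem_setOf_eq, Set.mem_empty_iff_false, iff_false]
          rintro (⟨_, _, _, h⟩ | ⟨h, _⟩ | ⟨h, _⟩ | ⟨h, _⟩) <;> omega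
        rw [h1, hXempty y (by omega)]
        simp
    · by_cases hv0 : v = 0
      · subst hv0
        have : {ω | ((0:ℤ) = 1 ∧ U ω = -1 ∧ X ω = y + 1 ∧ 0 ≤ y) ∨
            ((0:ℤ) = 0 ∧ U ω = 0 ∧ X ω = y) ∨
            ((0:ℤ) = -1 ∧ U ω = 1 ∧ X ω = y - 1 ∧ 1 ≤ y) ∨
            ((0:ℤ) = -1 ∧ U ω = -1 ∧ X ω = 0 ∧ y = 0)} = X ⁻¹' {y} ∩ U ⁻¹' {0} := by
          ext ω; simp only [Set.mem_setOf_eq, Set.mem_inter_iff, Set.mem_preimage,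
            Set.mem_singleton_iff]
          constructor
          · rintro (⟨h, _⟩ | ⟨_, h1, h2⟩ | ⟨h, _⟩ | ⟨h, _⟩) <;> first | exact ⟨h2, h1⟩ | omega
          · rintro ⟨h1, h2⟩; exact Or.inr (Or.inl ⟨trivial, h2, h1⟩)
        rw [this, hprod]
      · by_cases hvm1 : v = -1
        · subst hvm1
          by_cases hy : 1 ≤ y
          · obtain ⟨n, rfl⟩ : ∃ n : ℕ, y = (n : ℤ) := ⟨y.toNat, by omega⟩
            have : {ω | ((-1:ℤ) = 1 ∧ U ω = -1 ∧ X ω = (n:ℤ) + 1 ∧ 0 ≤ (n:ℤ)) ∨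
                ((-1:ℤ) = 0 ∧ U ω = 0 ∧ X ω = (n:ℤ)) ∨
                ((-1:ℤ) = -1 ∧ U ω = 1 ∧ X ω = (n:ℤ) - 1 ∧ 1 ≤ (n:ℤ)) ∨
                ((-1:ℤ) = -1 ∧ U ω = -1 ∧ X ω = 0 ∧ (n:ℤ) = 0)} =
                X ⁻¹' {((n:ℤ) - 1)} ∩ U ⁻¹' {1} := by
              ext ω; simp only [Set.mem_setOf_eq, Set.mem_inter_iff, Set.mem_preimage,
                Set.mem_singleton_iff]
              constructor
              · rintro (⟨h, _⟩ | ⟨h, _⟩ | ⟨_, h1, h2, _⟩ | ⟨_, _, _, h⟩) <;>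
                  first | exact ⟨h2, h1⟩ | omega
              · rintro ⟨h1, h2⟩; exact Or.inr (Or.inr (Or.inl ⟨trivial, h2, h1, hy⟩))
            rw [this, hprod, hmulkey2 n (by exact_mod_cast hy)]
          · by_cases hy0 : y = 0
            · subst hy0
              have : {ω | ((-1:ℤ) = 1 ∧ U ω = -1 ∧ X ω = (0:ℤ) + 1 ∧ 0 ≤ (0:ℤ)) ∨
                  ((-1:ℤ) = 0 ∧ U ω = 0 ∧ X ω = (0:ℤ)) ∨
                  ((-1:ℤ) = -1 ∧ U ω = 1 ∧ X ω = (0:ℤ) - 1 ∧ 1 ≤ (0:ℤ)) ∨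
                  ((-1:ℤ) = -1 ∧ U ω = -1 ∧ X ω = 0 ∧ (0:ℤ) = 0)} =
                  X ⁻¹' {(0:ℤ)} ∩ U ⁻¹' {-1} := by
                ext ω; simp only [Set.mem_setOf_eq, Set.mem_inter_iff, Set.mem_preimage,
                  Set.mem_singleton_iff]
                constructor
                · rintro (⟨h, _⟩ | ⟨h, _⟩ | ⟨_, _, _, h⟩ | ⟨_, h1, h2, _⟩) <;>
                    first | exact ⟨h2, h1⟩ | omega
                · rintro ⟨h1, h2⟩; exact Or.inr (Or.inr (Or.inr ⟨trivial, h2, h1, trivial⟩))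
              rw [this, hprod]
              -- need : P{X=0}P{U=-1} = P{X=0}P{U=-1}... target is P{X=0}*P{U=-1} vs
              -- P (X⁻¹'{0}) * P (U⁻¹'{-1}) : same. done
            · -- y < 0 and y ≠ 0, so y < 0
              have h1 : {ω | ((-1:ℤ) = 1 ∧ U ω = -1 ∧ X ω = y + 1 ∧ 0 ≤ y) ∨
                  ((-1:ℤ) = 0 ∧ U ω = 0 ∧ X ω = y) ∨
                  ((-1:ℤ) = -1 ∧ U ω = 1 ∧ X ω = y - 1 ∧ 1 ≤ y) ∨
                  ((-1:ℤ) = -1 ∧ U ω = -1 ∧ X ω = 0 ∧ y = 0)} = (∅ : Set Ω) := by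
                ext ω; simp only [Set.mem_setOf_eq, Set.mem_empty_iff_false, iff_false]
                rintro (⟨h, _⟩ | ⟨h, _⟩ | ⟨_, _, _, h⟩ | ⟨_, _, _, h⟩) <;> omega
              rw [h1, hXempty y (by omega)]
              simp
        · -- v not in {-1,0,1}
          have h1 : {ω | (v = 1 ∧ U ω = -1 ∧ X ω = y + 1 ∧ 0 ≤ y) ∨
              (v = 0 ∧ U ω = 0 ∧ X ω = y) ∨
              (v = -1 ∧ U ω = 1 ∧ X ω = y - 1 ∧ 1 ≤ y) ∨
              (v = -1 ∧ U ω = -1 ∧ X ω = 0 ∧ y = 0)} = (∅ : Set Ω) := by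
            ext ω; simp only [Set.mem_setOf_eq, Set.mem_empty_iff_false, iff_false]
            rintro (⟨h, _⟩ | ⟨h, _⟩ | ⟨h, _⟩ | ⟨h, _⟩) <;> tauto
          rw [h1, hUempty v hvm1 hv0 hv1]
          simp
  -- marginals
  have hfstY : Prod.fst ∘ (fun ω => (Y ω, V ω)) = Y := rfl
  have hsndV : Prod.snd ∘ (fun ω => (Y ω, V ω)) = V := rfl
  have hYX : Measure.map Y P = Measure.map X P := by
    have h1 : Measure.map Y P = (Measure.map (fun ω => (Y ω, V ω)) P).map Prod.fst := by
      rw [Measure.map_map measurable_fst hpairm]; rfl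
    have h2 : Measure.map X P = (Measure.map (fun ω => (X ω, U ω)) P).map Prod.fst := by
      rw [Measure.map_map measurable_fst hXUm]; rfl
    rw [h1, h2, hmap]
  have hVU : Measure.map V P = Measure.map U P := by
    have h1 : Measure.map V P = (Measure.map (fun ω => (Y ω, V ω)) P).map Prod.snd := by
      rw [Measure.map_map measurable_snd hpairm]; rfl
    have h2 : Measure.map U P = (Measure.map (fun ω => (X ω, U ω)) P).map Prod.snd := by
      rw [Measure.map_map measurable_snd hXUm]; rfl
    rw [h1, h2, hmap]
  have hindepYV : IndepFun Y V P := by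
    rw [indepFun_iff_map_prod_eq_prod_map_map hYm.aemeasurable hVm.aemeasurable]
    rw [hmap, hYX, hVU,
      ← (indepFun_iff_map_prod_eq_prod_map_map hXm.aemeasurable hUm.aemeasurable).mp hindep]
  exact ⟨hmap, hindepYV, hYX, hVU⟩
end

section
/- Let X be an ℕ₀-valued random variable with P(X=0) < 1 and U independent with P(U=1)=p, P(U=−1)=q, p+q=1, pq>0. Suppose Y = (X+U)⁺ and V = −U − 2(X+U)⁻ are independent, with p' = P(V=1), q' = P(V=−1). Then with ρ² = pp'/(qq') one has ρ ∈ (0,1), the conditional distributions of X given {X even} and given {X odd} satisfy P(X = 2k | X even) = (1−ρ²)ρ^{2k} = P(X = 2k+1 | X odd) for all k ∈ ℕ₀, and P(X odd) = p', P(Y even) = q. -/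
/-!
Write `a n = P(X = n)`. Off the boundary `V = -U`, so `V = 1` exactly when `U = -1` and `X ≠ 0`,
which gives `p' = q (1 - a 0)`; moreover `{Y = y, V = 1} = {X = y + 1, U = -1}`. Independence of
`Y` and `V` on these atoms yields `q' a 1 = p' a 0` and `q q' a (m + 2) = p p' a m`, so both
parity subsequences of `a` are geometric with ratio `ρ² = p p' / (q q')`. Summability of `a`
forces `ρ² < 1`, and `1 - ρ² = a 0 / q'` evaluates the two geometric sums as
`P(X even) = q'` and `P(X odd) = p'`.
-/

open MeasureTheory ProbabilityTheory Set Function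

section TwoStep

variable {a : ℕ → ℝ} {c : ℝ}

theorem two_step_iterate (hrec : ∀ m, a (m + 2) = c * a m) (k n : ℕ) :
    a (2 * k + n) = c ^ k * a n := by
  induction k with
  | zero => simp
  | succ k ih => rw [show 2 * (k + 1) + n = 2 * k + n + 2 by ring, hrec, ih, pow_succ]; ring

theorem norm_lt_one_of_summable_two_step (ha : Summable a) (hrec : ∀ m, a (m + 2) = c * a m)
    {n : ℕ} (hn : a n ≠ 0) : ‖c‖ < 1 := by
  have hsub : Summable fun k => a (2 * k + n) :=
    ha.comp_injective fun i j h => by simpa using h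
  simp_rw [two_step_iterate hrec] at hsub
  exact summable_geometric_iff_norm_lt_one.mp ((summable_mul_right_iff hn).mp hsub)

theorem hasSum_two_step (hrec : ∀ m, a (m + 2) = c * a m) (hc : ‖c‖ < 1) (n : ℕ) :
    HasSum (fun k => a (2 * k + n)) ((1 - c)⁻¹ * a n) := by
  simp_rw [two_step_iterate hrec]
  exact (hasSum_geometric_of_norm_lt_one hc).mul_right (a n)

end TwoStep

/-- Here `a n = P(X = n)`; `base` and `step` are the independence of `Y` and `V` at the atoms
`{Y = 0, V = 1}` and `{Y = m + 1, V = 1}`. -/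
structure ReflectedLawRelations (a : ℕ → ℝ) (p q p' q' : ℝ) : Prop where
  p_pos : 0 < p
  q_pos : 0 < q
  add_eq_one : p + q = 1
  hasSum_one : HasSum a 1
  nonneg : ∀ n, 0 ≤ a n
  zero_lt_one : a 0 < 1
  p'_eq : p' = q * (1 - a 0)
  q'_eq : q' = 1 - p'
  base : a 1 * q = (a 0 + a 1) * q * p'
  step : ∀ m, a (m + 2) * q = (a m * p + a (m + 2) * q) * p'

namespace ReflectedLawRelations

variable {a : ℕ → ℝ} {p q p' q' : ℝ}

theorem q'_eq_add (h : ReflectedLawRelations a p q p' q') : q' = p + q * a 0 := by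
  linear_combination h.q'_eq - h.p'_eq - h.add_eq_one

theorem p'_pos (h : ReflectedLawRelations a p q p' q') : 0 < p' := by
  rw [h.p'_eq]; exact mul_pos h.q_pos (by linarith [h.zero_lt_one])

theorem q'_pos (h : ReflectedLawRelations a p q p' q') : 0 < q' := by
  rw [h.q'_eq_add]; linarith [h.p_pos, mul_nonneg h.q_pos.le (h.nonneg 0)]

theorem ratio_pos (h : ReflectedLawRelations a p q p' q') : 0 < p * p' / (q * q') := by
  have := h.p_pos; have := h.q_pos; have := h.p'_pos; have := h.q'_pos
  positivity

theorem two_step (h : ReflectedLawRelations a p q p' q') (m : ℕ) :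
    a (m + 2) = p * p' / (q * q') * a m := by
  have := h.q_pos; have := h.q'_pos
  rw [div_mul_eq_mul_div, eq_div_iff (by positivity)]
  linear_combination h.step m + a (m + 2) * q * h.q'_eq

theorem norm_ratio_lt_one (h : ReflectedLawRelations a p q p' q') :
    ‖p * p' / (q * q')‖ < 1 := by
  obtain ⟨n, hn⟩ : ∃ n, a n ≠ 0 := by
    by_contra! hzero
    exact one_ne_zero (h.hasSum_one.unique (funext hzero ▸ hasSum_zero))
  exact norm_lt_one_of_summable_two_step h.hasSum_one.summable h.two_step hn

theorem ratio_lt_one (h : ReflectedLawRelations a p q p' q') : p * p' / (q * q') < 1 :=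
  lt_of_abs_lt h.norm_ratio_lt_one

theorem one_sub_ratio (h : ReflectedLawRelations a p q p' q') :
    1 - p * p' / (q * q') = a 0 / q' := by
  have := h.q_pos; have := h.q'_pos
  field_simp
  linear_combination q * h.q'_eq_add - p * h.p'_eq + q * a 0 * h.add_eq_one

theorem apply_zero_pos (h : ReflectedLawRelations a p q p' q') : 0 < a 0 :=
  (div_pos_iff_of_pos_right h.q'_pos).mp (h.one_sub_ratio ▸ sub_pos.mpr h.ratio_lt_one)

theorem apply_one (h : ReflectedLawRelations a p q p' q') : a 1 = a 0 / q' * p' := by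
  rw [div_mul_eq_mul_div, eq_div_iff h.q'_pos.ne']
  exact mul_left_cancel₀ h.q_pos.ne' (by linear_combination h.base + q * a 1 * h.q'_eq)

theorem hasSum_even (h : ReflectedLawRelations a p q p' q') :
    HasSum (fun k => a (2 * k)) q' := by
  have := hasSum_two_step h.two_step h.norm_ratio_lt_one 0
  rwa [h.one_sub_ratio, inv_div, div_mul_cancel₀ _ h.apply_zero_pos.ne'] at this

theorem hasSum_odd (h : ReflectedLawRelations a p q p' q') :
    HasSum (fun k => a (2 * k + 1)) p' := by
  convert hasSum_two_step h.two_step h.norm_ratio_lt_one 1 using 1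
  rw [h.one_sub_ratio, h.apply_one]
  field_simp [h.q'_pos.ne', h.apply_zero_pos.ne']

theorem apply_two_mul (h : ReflectedLawRelations a p q p' q') (k : ℕ) :
    a (2 * k) = (1 - p * p' / (q * q')) * (p * p' / (q * q')) ^ k * q' := by
  refine (two_step_iterate h.two_step k 0).trans ?_
  rw [h.one_sub_ratio]
  field_simp [h.q'_pos.ne']

theorem apply_two_mul_add_one (h : ReflectedLawRelations a p q p' q') (k : ℕ) :
    a (2 * k + 1) = (1 - p * p' / (q * q')) * (p * p' / (q * q')) ^ k * p' := by
  rw [two_step_iterate h.two_step, h.one_sub_ratio, h.apply_one]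
  ring

end ReflectedLawRelations

theorem MeasureTheory.hasSum_measureReal_preimage_range {Ω β : Type*} [MeasurableSpace Ω]
    [MeasurableSpace β] [MeasurableSingletonClass β] {P : Measure Ω} [IsFiniteMeasure P]
    {X : Ω → β} (hX : Measurable X) {f : ℕ → β} (hf : Injective f) :
    HasSum (fun k => P.real (X ⁻¹' {f k})) (P.real (X ⁻¹' range f)) := by
  have hdisj : Pairwise (Disjoint on fun k => X ⁻¹' {f k}) := fun i j hij =>
    (disjoint_singleton.mpr (hf.ne hij)).preimage X
  have hunion := measure_iUnion (μ := P) hdisj fun k => hX (measurableSet_singleton (f k))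
  rw [← preimage_iUnion, iUnion_singleton_eq_range] at hunion
  rw [measureReal_def, hunion, ENNReal.tsum_toReal_eq fun k => measure_ne_top P _]
  exact ENNReal.hasSum_toReal (hunion ▸ measure_ne_top P _)

theorem ProbabilityTheory.IndepFun.measureReal_inter_preimage_eq_mul {Ω β γ : Type*}
    [MeasurableSpace Ω] [MeasurableSpace β] [MeasurableSpace γ] {P : Measure Ω}
    {X : Ω → β} {Y : Ω → γ} (h : IndepFun X Y P) {s : Set β} {t : Set γ}
    (hs : MeasurableSet s) (ht : MeasurableSet t) :
    P.real (X ⁻¹' s ∩ Y ⁻¹' t) = P.real (X ⁻¹' s) * P.real (Y ⁻¹' t) := by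
  simp only [measureReal_def, h.measure_inter_preimage_eq_mul s t hs ht, ENNReal.toReal_mul]

def reflectedPosition (x u : ℤ) : ℤ := max (x + u) 0

def reversedStep (x u : ℤ) : ℤ := -u - 2 * max (-(x + u)) 0

section Pointwise

variable {x u : ℤ}

theorem reversedStep_eq_one_iff (hx : 0 ≤ x) (hu : u ∈ ({-1, 1} : Set ℤ)) :
    reversedStep x u = 1 ↔ x ≠ 0 ∧ u = -1 := by
  unfold reversedStep; simp only [mem_insert_iff, mem_singleton_iff] at hu; omega

theorem reversedStep_eq_neg_one_iff (hx : 0 ≤ x) (hu : u ∈ ({-1, 1} : Set ℤ)) :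
    reversedStep x u = -1 ↔ reversedStep x u ≠ 1 := by
  unfold reversedStep; simp only [mem_insert_iff, mem_singleton_iff] at hu; omega

theorem reflectedPosition_eq_and_reversedStep_eq_one_iff
    (hu : u ∈ ({-1, 1} : Set ℤ)) (y : ℕ) :
    reflectedPosition x u = y ∧ reversedStep x u = 1 ↔ x = y + 1 ∧ u = -1 := by
  unfold reflectedPosition reversedStep
  simp only [mem_insert_iff, mem_singleton_iff] at hu
  omega

theorem reflectedPosition_eq_zero_iff (hx : 0 ≤ x) (hu : u ∈ ({-1, 1} : Set ℤ)) :
    reflectedPosition x u = 0 ↔ (x = 0 ∨ x = 1) ∧ u = -1 := by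
  unfold reflectedPosition; simp only [mem_insert_iff, mem_singleton_iff] at hu; omega

theorem reflectedPosition_eq_succ_iff (hu : u ∈ ({-1, 1} : Set ℤ)) (y : ℕ) :
    reflectedPosition x u = y + 1 ↔ (x = y ∧ u = 1) ∨ (x = y + 2 ∧ u = -1) := by
  unfold reflectedPosition; simp only [mem_insert_iff, mem_singleton_iff] at hu; omega

theorem even_reflectedPosition_iff (hx : 0 ≤ x) (hu : u ∈ ({-1, 1} : Set ℤ)) :
    Even (reflectedPosition x u) ↔ (Odd x ∧ u = 1) ∨ ((x = 0 ∨ Odd x) ∧ u = -1) := by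
  unfold reflectedPosition
  simp only [mem_insert_iff, mem_singleton_iff] at hu
  simp only [Int.even_iff, Int.odd_iff]
  omega

end Pointwise

section Law

variable {Ω : Type*} [MeasurableSpace Ω] {P : Measure Ω} {X U : Ω → ℤ}

theorem hasSum_measureReal_eq_two_mul_add [IsFiniteMeasure P] (hXm : Measurable X)
    (hXnn : ∀ ω, 0 ≤ X ω) {r : ℕ} (hr : r < 2) :
    HasSum (fun k : ℕ => P.real {ω | X ω = 2 * k + r}) (P.real {ω | X ω % 2 = r}) := by
  have hrange : X ⁻¹' range (fun k : ℕ => 2 * (k : ℤ) + r) = {ω | X ω % 2 = r} := by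
    ext ω
    have := hXnn ω
    refine ⟨?_, fun h => ⟨(X ω).toNat / 2, ?_⟩⟩
    · rintro ⟨k, hk⟩
      simp only [mem_ofPred_eq, ← hk]
      omega
    simp only [mem_ofPred_eq] at h
    dsimp only
    omega
  rw [← hrange]
  exact hasSum_measureReal_preimage_range hXm fun i j h => by simpa using h

theorem hasSum_measureReal_eq_natCast [IsProbabilityMeasure P] (hXm : Measurable X)
    (hXnn : ∀ ω, 0 ≤ X ω) : HasSum (fun n : ℕ => P.real {ω | X ω = n}) 1 := by
  have hrange : X ⁻¹' range ((↑) : ℕ → ℤ) = univ :=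
    eq_univ_of_forall fun ω => ⟨(X ω).toNat, Int.toNat_of_nonneg (hXnn ω)⟩
  rw [← probReal_univ (μ := P), ← hrange]
  exact hasSum_measureReal_preimage_range hXm Nat.cast_injective

theorem hasSum_measureReal_even [IsFiniteMeasure P] (hXm : Measurable X)
    (hXnn : ∀ ω, 0 ≤ X ω) :
    HasSum (fun k : ℕ => P.real {ω | X ω = 2 * k}) (P.real {ω | Even (X ω)}) := by
  simpa [Int.even_iff] using hasSum_measureReal_eq_two_mul_add (P := P) hXm hXnn two_pos

theorem hasSum_measureReal_odd [IsFiniteMeasure P] (hXm : Measurable X)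
    (hXnn : ∀ ω, 0 ≤ X ω) :
    HasSum (fun k : ℕ => P.real {ω | X ω = 2 * k + 1}) (P.real {ω | Odd (X ω)}) := by
  simpa [Int.odd_iff] using hasSum_measureReal_eq_two_mul_add (P := P) hXm hXnn one_lt_two

theorem measureReal_reversedStep_eq_one [IsProbabilityMeasure P] (hXm : Measurable X)
    (hindep : IndepFun X U P) (hXnn : ∀ ω, 0 ≤ X ω)
    (hUrange : ∀ ω, U ω ∈ ({-1, 1} : Set ℤ)) :
    P.real {ω | reversedStep (X ω) (U ω) = 1} =
      P.real {ω | U ω = -1} * (1 - P.real {ω | X ω = 0}) := by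
  have hset : {ω | reversedStep (X ω) (U ω) = 1} = X ⁻¹' {0}ᶜ ∩ U ⁻¹' {-1} := by
    ext ω; exact reversedStep_eq_one_iff (hXnn ω) (hUrange ω)
  rw [hset, hindep.measureReal_inter_preimage_eq_mul .of_discrete .of_discrete, preimage_compl,
    probReal_compl_eq_one_sub (hXm (measurableSet_singleton 0)), mul_comm]
  rfl

theorem measureReal_reversedStep_eq_neg_one [IsProbabilityMeasure P] (hXm : Measurable X)
    (hUm : Measurable U) (hXnn : ∀ ω, 0 ≤ X ω) (hUrange : ∀ ω, U ω ∈ ({-1, 1} : Set ℤ)) :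
    P.real {ω | reversedStep (X ω) (U ω) = -1} =
      1 - P.real {ω | reversedStep (X ω) (U ω) = 1} := by
  have hset : {ω | reversedStep (X ω) (U ω) = -1} = {ω | reversedStep (X ω) (U ω) = 1}ᶜ := by
    ext ω; exact reversedStep_eq_neg_one_iff (hXnn ω) (hUrange ω)
  rw [hset, probReal_compl_eq_one_sub]
  exact measurableSet_eq_fun (by fun_prop) measurable_const

theorem measureReal_reflectedPosition_eq_zero [IsFiniteMeasure P] (hXm : Measurable X)
    (hindep : IndepFun X U P) (hXnn : ∀ ω, 0 ≤ X ω) (hUrange : ∀ ω, U ω ∈ ({-1, 1} : Set ℤ)) :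
    P.real {ω | reflectedPosition (X ω) (U ω) = 0} =
      (P.real {ω | X ω = 0} + P.real {ω | X ω = 1}) * P.real {ω | U ω = -1} := by
  have hset : {ω | reflectedPosition (X ω) (U ω) = 0} = X ⁻¹' {0, 1} ∩ U ⁻¹' {-1} := by
    ext ω; exact reflectedPosition_eq_zero_iff (hXnn ω) (hUrange ω)
  rw [hset, hindep.measureReal_inter_preimage_eq_mul .of_discrete .of_discrete, insert_eq,
    preimage_union, measureReal_union ((disjoint_singleton.mpr zero_ne_one).preimage X)
      (hXm (measurableSet_singleton 1))]
  rfl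

theorem measureReal_reflectedPosition_eq_succ [IsFiniteMeasure P] (hXm : Measurable X)
    (hUm : Measurable U) (hindep : IndepFun X U P) (hUrange : ∀ ω, U ω ∈ ({-1, 1} : Set ℤ))
    (y : ℕ) :
    P.real {ω | reflectedPosition (X ω) (U ω) = y + 1} =
      P.real {ω | X ω = y} * P.real {ω | U ω = 1} +
        P.real {ω | X ω = y + 2} * P.real {ω | U ω = -1} := by
  have hset : {ω | reflectedPosition (X ω) (U ω) = y + 1} =
      (X ⁻¹' {(y : ℤ)} ∩ U ⁻¹' {1}) ∪ (X ⁻¹' {(y : ℤ) + 2} ∩ U ⁻¹' {-1}) := by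
    ext ω; exact reflectedPosition_eq_succ_iff (hUrange ω) y
  have hdisj : Disjoint (X ⁻¹' {(y : ℤ)} ∩ U ⁻¹' {1}) (X ⁻¹' {(y : ℤ) + 2} ∩ U ⁻¹' {-1}) :=
    ((disjoint_singleton.mpr (by omega)).preimage X).mono inter_subset_left inter_subset_left
  rw [hset, measureReal_union hdisj ((hXm .of_discrete).inter (hUm .of_discrete)),
    hindep.measureReal_inter_preimage_eq_mul .of_discrete .of_discrete,
    hindep.measureReal_inter_preimage_eq_mul .of_discrete .of_discrete]
  rfl

theorem measureReal_even_reflectedPosition [IsFiniteMeasure P] (hXm : Measurable X)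
    (hUm : Measurable U) (hindep : IndepFun X U P) (hXnn : ∀ ω, 0 ≤ X ω)
    (hUrange : ∀ ω, U ω ∈ ({-1, 1} : Set ℤ)) :
    P.real {ω | Even (reflectedPosition (X ω) (U ω))} =
      P.real {ω | Odd (X ω)} * P.real {ω | U ω = 1} +
        (P.real {ω | X ω = 0} + P.real {ω | Odd (X ω)}) * P.real {ω | U ω = -1} := by
  have hset : {ω | Even (reflectedPosition (X ω) (U ω))} =
      (X ⁻¹' {n | Odd n} ∩ U ⁻¹' {1}) ∪ (X ⁻¹' ({0} ∪ {n | Odd n}) ∩ U ⁻¹' {-1}) := by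
    ext ω; exact even_reflectedPosition_iff (hXnn ω) (hUrange ω)
  have hdisj :
      Disjoint (X ⁻¹' {n | Odd n} ∩ U ⁻¹' {1}) (X ⁻¹' ({0} ∪ {n | Odd n}) ∩ U ⁻¹' {-1}) :=
    ((disjoint_singleton.mpr (by norm_num)).preimage U).mono inter_subset_right inter_subset_right
  have hzero_odd : Disjoint (X ⁻¹' {0}) (X ⁻¹' {n | Odd n}) :=
    (disjoint_singleton_left.mpr (by simp)).preimage X
  rw [hset, measureReal_union hdisj ((hXm .of_discrete).inter (hUm .of_discrete)),
    hindep.measureReal_inter_preimage_eq_mul .of_discrete .of_discrete,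
    hindep.measureReal_inter_preimage_eq_mul .of_discrete .of_discrete, preimage_union,
    measureReal_union hzero_odd (hXm .of_discrete)]
  rfl

theorem measureReal_eq_succ_mul (hindep : IndepFun X U P)
    (hUrange : ∀ ω, U ω ∈ ({-1, 1} : Set ℤ))
    (hYV : IndepFun (fun ω => reflectedPosition (X ω) (U ω))
      (fun ω => reversedStep (X ω) (U ω)) P) (y : ℕ) :
    P.real {ω | X ω = y + 1} * P.real {ω | U ω = -1} =
      P.real {ω | reflectedPosition (X ω) (U ω) = y} *
        P.real {ω | reversedStep (X ω) (U ω) = 1} := by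
  have hset : (fun ω => reflectedPosition (X ω) (U ω)) ⁻¹' {(y : ℤ)} ∩
      (fun ω => reversedStep (X ω) (U ω)) ⁻¹' {1} = X ⁻¹' {(y : ℤ) + 1} ∩ U ⁻¹' {-1} := by
    ext ω; exact reflectedPosition_eq_and_reversedStep_eq_one_iff (hUrange ω) y
  have hXU := hindep.measureReal_inter_preimage_eq_mul (s := {(y : ℤ) + 1}) (t := {-1})
    .of_discrete .of_discrete
  have hYVatom := hYV.measureReal_inter_preimage_eq_mul (s := {(y : ℤ)}) (t := {1})
    .of_discrete .of_discrete
  rw [hset] at hYVatom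
  exact hXU.symm.trans hYVatom

theorem measureReal_reflectedPosition_zero_reversedStep_one [IsFiniteMeasure P]
    (hXm : Measurable X) (hindep : IndepFun X U P) (hXnn : ∀ ω, 0 ≤ X ω)
    (hUrange : ∀ ω, U ω ∈ ({-1, 1} : Set ℤ))
    (hYV : IndepFun (fun ω => reflectedPosition (X ω) (U ω))
      (fun ω => reversedStep (X ω) (U ω)) P) :
    P.real {ω | X ω = 1} * P.real {ω | U ω = -1} =
      (P.real {ω | X ω = 0} + P.real {ω | X ω = 1}) * P.real {ω | U ω = -1} *
        P.real {ω | reversedStep (X ω) (U ω) = 1} := by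
  have h := measureReal_eq_succ_mul hindep hUrange hYV 0
  rwa [Nat.cast_zero, measureReal_reflectedPosition_eq_zero hXm hindep hXnn hUrange] at h

theorem measureReal_reflectedPosition_succ_reversedStep_one [IsFiniteMeasure P]
    (hXm : Measurable X) (hUm : Measurable U) (hindep : IndepFun X U P)
    (hUrange : ∀ ω, U ω ∈ ({-1, 1} : Set ℤ))
    (hYV : IndepFun (fun ω => reflectedPosition (X ω) (U ω))
      (fun ω => reversedStep (X ω) (U ω)) P) (m : ℕ) :
    P.real {ω | X ω = m + 2} * P.real {ω | U ω = -1} =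
      (P.real {ω | X ω = m} * P.real {ω | U ω = 1} +
        P.real {ω | X ω = m + 2} * P.real {ω | U ω = -1}) *
          P.real {ω | reversedStep (X ω) (U ω) = 1} := by
  have h := measureReal_eq_succ_mul hindep hUrange hYV (m + 1)
  rwa [Nat.cast_succ, measureReal_reflectedPosition_eq_succ hXm hUm hindep hUrange] at h

theorem ReflectedLawRelations.of_indepFun [IsProbabilityMeasure P] (hXm : Measurable X)
    (hUm : Measurable U) (hindep : IndepFun X U P) (hXnn : ∀ ω, 0 ≤ X ω)
    (hUrange : ∀ ω, U ω ∈ ({-1, 1} : Set ℤ))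
    (hYV : IndepFun (fun ω => reflectedPosition (X ω) (U ω))
      (fun ω => reversedStep (X ω) (U ω)) P)
    {p q p' q' : ℝ} (hp : 0 < p) (hq : 0 < q) (hsum : p + q = 1)
    (hX0 : P.real {ω | X ω = 0} < 1) (hU1 : P.real {ω | U ω = 1} = p)
    (hUm1 : P.real {ω | U ω = -1} = q)
    (hp' : P.real {ω | reversedStep (X ω) (U ω) = 1} = p')
    (hq' : P.real {ω | reversedStep (X ω) (U ω) = -1} = q') :
    ReflectedLawRelations (fun n => P.real {ω | X ω = n}) p q p' q' where
  p_pos := hp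
  q_pos := hq
  add_eq_one := hsum
  hasSum_one := hasSum_measureReal_eq_natCast hXm hXnn
  nonneg _ := measureReal_nonneg
  zero_lt_one := hX0
  p'_eq := by
    rw [← hp', ← hUm1]; exact measureReal_reversedStep_eq_one hXm hindep hXnn hUrange
  q'_eq := hq'.symm.trans (hp' ▸ measureReal_reversedStep_eq_neg_one hXm hUm hXnn hUrange)
  base := by
    rw [← hUm1, ← hp']
    exact measureReal_reflectedPosition_zero_reversedStep_one hXm hindep hXnn hUrange hYV
  step m := by
    rw [← hU1, ← hUm1, ← hp']
    exact measureReal_reflectedPosition_succ_reversedStep_one hXm hUm hindep hUrange hYV m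

end Law

/-- the `r = 0` case of the reflected random walk characterization. -/
theorem reflecting_walk_characterization_r_zero
    {Ω : Type*} [MeasurableSpace Ω] (P : Measure Ω) [IsProbabilityMeasure P]
    (p q : ℝ) (hpq : 0 < p * q) (hsum : p + q = 1)
    (X U : Ω → ℤ) (hXm : Measurable X) (hUm : Measurable U)
    (hindep : IndepFun X U P)
    (hXnn : ∀ ω, 0 ≤ X ω)
    (hX0 : (P {ω | X ω = 0}).toReal < 1)
    (hUrange : ∀ ω, U ω ∈ ({-1, 1} : Set ℤ))
    (hU1 : (P {ω | U ω = 1}).toReal = p)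
    (hUm1 : (P {ω | U ω = -1}).toReal = q)
    (hYV : IndepFun (fun ω => max (X ω + U ω) 0)
        (fun ω => -U ω - 2 * max (-(X ω + U ω)) 0) P)
    (p' q' : ℝ)
    (hp' : (P {ω | -U ω - 2 * max (-(X ω + U ω)) 0 = 1}).toReal = p')
    (hq' : (P {ω | -U ω - 2 * max (-(X ω + U ω)) 0 = -1}).toReal = q') :
    0 < p * p' / (q * q') ∧ p * p' / (q * q') < 1 ∧
    (∀ k : ℕ,
      (P {ω | X ω = 2 * (k : ℤ)}).toReal =
        (1 - p * p' / (q * q')) * Real.sqrt (p * p' / (q * q')) ^ (2 * k) *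
          (P {ω | Even (X ω)}).toReal ∧
      (P {ω | X ω = 2 * (k : ℤ) + 1}).toReal =
        (1 - p * p' / (q * q')) * Real.sqrt (p * p' / (q * q')) ^ (2 * k) *
          (P {ω | Odd (X ω)}).toReal) ∧
    (P {ω | Odd (X ω)}).toReal = p' ∧
    (P {ω | Even (max (X ω + U ω) 0)}).toReal = q := by
  simp only [← measureReal_def] at hX0 hU1 hUm1 hp' hq' ⊢
  have hlaw := ReflectedLawRelations.of_indepFun hXm hUm hindep hXnn hUrange hYV
    (by nlinarith) (by nlinarith) hsum hX0 hU1 hUm1 hp' hq'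
  have heven : P.real {ω | Even (X ω)} = q' :=
    (hasSum_measureReal_even hXm hXnn).unique hlaw.hasSum_even
  have hodd : P.real {ω | Odd (X ω)} = p' :=
    (hasSum_measureReal_odd hXm hXnn).unique hlaw.hasSum_odd
  refine ⟨hlaw.ratio_pos, hlaw.ratio_lt_one, fun k => ?_, hodd, ?_⟩
  · rw [pow_mul, Real.sq_sqrt hlaw.ratio_pos.le, heven, hodd]
    exact ⟨hlaw.apply_two_mul k, hlaw.apply_two_mul_add_one k⟩
  · change P.real {ω | Even (reflectedPosition (X ω) (U ω))} = q
    rw [measureReal_even_reflectedPosition hXm hUm hindep hXnn hUrange, hodd, hU1, hUm1]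
    linear_combination p' * hsum + hlaw.p'_eq
end

section
/- Fix |β| < 1 and σ > 0. Let X ∼ N(0, σ²/(1−β²)) and U uniform on (0,1) be independent, and let Φ be the standard normal CDF. Then Y = βX + σΦ⁻¹(U) and V = Φ((1−β²)X/σ − βΦ⁻¹(U)) are independent, with Y ∼ N(0, σ²/(1−β²)) and V uniform on (0,1). -/
/-!
`Z = Φ⁻¹(U)` is standard normal by inverse transform sampling and independent of `X`, so
`(X, Z)` is a centred Gaussian vector. `Y = βX + σZ` and `W = (1 - β²)X/σ - βZ` are linear
images of it, hence jointly Gaussian, with `Var Y = Var X`, `Var W = 1` and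
`Cov(Y, W) = β(1 - β²)/σ · Var X - βσ = 0`. Uncorrelated jointly Gaussian variables are
independent, and `V = Φ(W)` is uniform by the probability integral transform.
-/

open MeasureTheory ProbabilityTheory Set
open scoped NNReal

namespace ProbabilityTheory

theorem strictMono_cdf_of_absolutelyContinuous {μ : Measure ℝ} [IsProbabilityMeasure μ]
    (h : volume ≪ μ) : StrictMono (cdf μ) := by
  intro a b hab
  have hpos : μ (Ioc a b) ≠ 0 := fun h0 => by simpa [hab.not_ge] using h h0
  rw [← measure_cdf μ, StieltjesFunction.measure_Ioc, ne_eq, ENNReal.ofReal_eq_zero, not_le,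
    sub_pos] at hpos
  exact hpos

section InverseTransform

variable {μ : Measure ℝ} [IsProbabilityMeasure μ] {G : ℝ → ℝ}

theorem hasLaw_of_rightInvOn_cdf (hF : StrictMono (cdf μ)) (hG : RightInvOn G (cdf μ) (Ioo 0 1)) :
    HasLaw G μ (volume.restrict (Ioo 0 1)) := by
  have le_iff {u : ℝ} (hu : u ∈ Ioo (0 : ℝ) 1) (t : ℝ) : G u ≤ t ↔ u ≤ cdf μ t := by
    rw [← hF.le_iff_le, hG hu]
  have hmono : MonotoneOn G (Ioo 0 1) := fun u hu v hv huv => by rwa [le_iff hu, hG hv]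
  have hGm : AEMeasurable G (volume.restrict (Ioo 0 1)) :=
    aemeasurable_restrict_of_monotoneOn measurableSet_Ioo hmono
  refine ⟨hGm, ?_⟩
  have : IsProbabilityMeasure (volume.restrict (Ioo (0 : ℝ) 1)) := ⟨by simp⟩
  have : IsProbabilityMeasure ((volume.restrict (Ioo (0 : ℝ) 1)).map G) :=
    Measure.isProbabilityMeasure_map hGm
  refine Measure.ext_of_Iic _ _ fun t => ?_
  have hlt : cdf μ t < 1 := (hF (lt_add_one t)).trans_le (cdf_le_one μ _)
  have hpre : G ⁻¹' Iic t ∩ Ioo 0 1 = Ioc 0 (cdf μ t) := by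
    ext u
    simp only [mem_inter_iff, mem_preimage, mem_Iic, mem_Ioc]
    constructor
    · rintro ⟨hut, hu⟩
      exact ⟨hu.1, (le_iff hu t).1 hut⟩
    · rintro ⟨hu0, hut⟩
      have hu : u ∈ Ioo (0 : ℝ) 1 := ⟨hu0, hut.trans_lt hlt⟩
      exact ⟨(le_iff hu t).2 hut, hu⟩
  rw [Measure.map_apply_of_aemeasurable hGm measurableSet_Iic,
    Measure.restrict_apply' measurableSet_Ioo, hpre, Real.volume_Ioc, sub_zero, ofReal_cdf]

theorem hasLaw_cdf_of_rightInvOn_cdf (hF : StrictMono (cdf μ))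
    (hG : RightInvOn G (cdf μ) (Ioo 0 1)) :
    HasLaw (cdf μ) (volume.restrict (Ioo 0 1)) μ := by
  have hcomp :
      HasLaw (fun u => cdf μ (G u)) (volume.restrict (Ioo 0 1)) (volume.restrict (Ioo 0 1)) :=
    HasLaw.id.congr ((ae_restrict_iff' measurableSet_Ioo).2 (ae_of_all _ fun _ hu => hG hu))
  exact HasLaw.comp_of_hasLaw_comp (monotone_cdf μ).measurable.aemeasurable
    (hasLaw_of_rightInvOn_cdf hF hG) HasLaw.id hcomp

end InverseTransform

section GaussianLinearCombination

variable {Ω : Type*} [MeasurableSpace Ω] {P : Measure Ω} {X Z : Ω → ℝ} {v w : ℝ≥0}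

theorem IndepFun.hasLaw_gaussianReal_mul_add_mul (hXZ : X ⟂ᵢ[P] Z)
    (hX : HasLaw X (gaussianReal 0 v) P) (hZ : HasLaw Z (gaussianReal 0 w) P) (a b : ℝ)
    {u : ℝ≥0} (hu : a ^ 2 * v + b ^ 2 * w = u) :
    HasLaw (fun ω => a * X ω + b * Z ω) (gaussianReal 0 u) P := by
  have haX := gaussianReal_const_mul hX a
  have hbZ := gaussianReal_const_mul hZ b
  refine ⟨haX.aemeasurable.add hbZ.aemeasurable, ?_⟩
  have hsum := gaussianReal_add_gaussianReal_of_indepFun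
    (hXZ.comp (measurable_const_mul a) (measurable_const_mul b)) haX.map_eq hbZ.map_eq
  convert hsum using 2
  · rfl
  · ring
  · rw [← NNReal.coe_inj, ← hu]
    simp

theorem IndepFun.indepFun_mul_add_mul_of_gaussianReal (hXZ : X ⟂ᵢ[P] Z)
    (hX : HasLaw X (gaussianReal 0 v) P) (hZ : HasLaw Z (gaussianReal 0 w) P) (a b c d : ℝ)
    (h : a * c * v + b * d * w = 0) :
    (fun ω => a * X ω + b * Z ω) ⟂ᵢ[P] (fun ω => c * X ω + d * Z ω) := by
  have hXg := hX.hasGaussianLaw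
  have hZg := hZ.hasGaussianLaw
  have hXZg := hXZ.hasGaussianLaw hXg hZg
  let L : ℝ × ℝ →L[ℝ] ℝ × ℝ :=
    (a • ContinuousLinearMap.fst ℝ ℝ ℝ + b • ContinuousLinearMap.snd ℝ ℝ ℝ).prod
      (c • ContinuousLinearMap.fst ℝ ℝ ℝ + d • ContinuousLinearMap.snd ℝ ℝ ℝ)
  refine (hXZg.map_fun L).indepFun_of_covariance_eq_zero ?_
  have := hX.isProbabilityMeasure
  have hX2 := hXg.memLp_two
  have hZ2 := hZg.memLp_two
  have hcov : cov[X, Z; P] = 0 := hXZ.covariance_eq_zero hX2 hZ2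
  calc cov[(fun ω => a * X ω) + (fun ω => b * Z ω),
        (fun ω => c * X ω) + (fun ω => d * Z ω); P]
      = a * c * Var[X; P] + (a * d + b * c) * cov[X, Z; P] + b * d * Var[Z; P] := by
        rw [covariance_add_left (hX2.const_mul a) (hZ2.const_mul b)
            ((hX2.const_mul c).add (hZ2.const_mul d)),
          covariance_add_right (hX2.const_mul a) (hX2.const_mul c) (hZ2.const_mul d),
          covariance_add_right (hZ2.const_mul b) (hX2.const_mul c) (hZ2.const_mul d)]
        simp only [covariance_const_mul_left, covariance_const_mul_right,
          covariance_self hX.aemeasurable, covariance_self hZ.aemeasurable, covariance_comm Z X]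
        ring
    _ = 0 := by
      rw [hcov, hX.variance_eq, hZ.variance_eq, variance_id_gaussianReal, variance_id_gaussianReal]
      linear_combination h

end GaussianLinearCombination

end ProbabilityTheory

theorem gaussian_rosenblatt_independence_general
    {Ω : Type*} [MeasurableSpace Ω] (P : Measure Ω)
    (β σ : ℝ) (hβ : |β| < 1) (hσ : 0 < σ)
    (X U : Ω → ℝ) (hXm : Measurable X) (hUm : Measurable U)
    (hindep : IndepFun X U P)
    (hX : Measure.map X P = gaussianReal 0 (Real.toNNReal (σ ^ 2 / (1 - β ^ 2))))
    (hU : Measure.map U P = volume.restrict (Set.Ioo (0 : ℝ) 1))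
    (Φ Φinv : ℝ → ℝ)
    (hΦ : Φ = fun t => cdf (gaussianReal 0 1) t)
    (hΦinv : (∀ t : ℝ, Φinv (Φ t) = t) ∧ ∀ u ∈ Set.Ioo (0 : ℝ) 1, Φ (Φinv u) = u) :
    IndepFun (fun ω => β * X ω + σ * Φinv (U ω))
        (fun ω => Φ ((1 - β ^ 2) * X ω / σ - β * Φinv (U ω))) P ∧
    Measure.map (fun ω => β * X ω + σ * Φinv (U ω)) P =
      gaussianReal 0 (Real.toNNReal (σ ^ 2 / (1 - β ^ 2))) ∧
    Measure.map (fun ω => Φ ((1 - β ^ 2) * X ω / σ - β * Φinv (U ω))) P =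
      volume.restrict (Set.Ioo (0 : ℝ) 1) := by
  obtain ⟨-, hΦinv⟩ := hΦinv
  replace hΦ : Φ = cdf (gaussianReal 0 1) := hΦ
  subst hΦ
  have hF :=
    strictMono_cdf_of_absolutelyContinuous (gaussianReal_absolutelyContinuous' 0 one_ne_zero)
  have hΦinvLaw := hasLaw_of_rightInvOn_cdf hF hΦinv
  have hXLaw : HasLaw X (gaussianReal 0 (σ ^ 2 / (1 - β ^ 2)).toNNReal) P :=
    ⟨hXm.aemeasurable, hX⟩
  have hZ : HasLaw (fun ω => Φinv (U ω)) (gaussianReal 0 1) P :=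
    hΦinvLaw.comp ⟨hUm.aemeasurable, hU⟩
  have hXZ : X ⟂ᵢ[P] fun ω => Φinv (U ω) :=
    hindep.comp₀ hXm.aemeasurable hUm.aemeasurable aemeasurable_id (hU ▸ hΦinvLaw.aemeasurable)
  have hβ2 : 0 < 1 - β ^ 2 := by nlinarith [abs_nonneg β, sq_abs β]
  have hv : ((σ ^ 2 / (1 - β ^ 2)).toNNReal : ℝ) = σ ^ 2 / (1 - β ^ 2) :=
    Real.coe_toNNReal _ (by positivity)
  have hWlin (ω : Ω) : (1 - β ^ 2) * X ω / σ - β * Φinv (U ω)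
      = (1 - β ^ 2) / σ * X ω + -β * Φinv (U ω) := by ring
  simp only [hWlin]
  have hY := hXZ.hasLaw_gaussianReal_mul_add_mul hXLaw hZ β σ
    (by rw [hv, NNReal.coe_one]; field_simp; ring)
  have hW := hXZ.hasLaw_gaussianReal_mul_add_mul hXLaw hZ ((1 - β ^ 2) / σ) (-β) (u := 1)
    (by rw [hv, NNReal.coe_one]; field_simp; ring)
  have hYW := hXZ.indepFun_mul_add_mul_of_gaussianReal hXLaw hZ β σ ((1 - β ^ 2) / σ) (-β)
    (by rw [hv, NNReal.coe_one]; field_simp; ring)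
  exact ⟨hYW.comp measurable_id (monotone_cdf _).measurable, hY.map_eq,
    ((hasLaw_cdf_of_rightInvOn_cdf hF hΦinv).comp hW).map_eq⟩

/-- for `X ~ N(0, σ²/(1-β²))` and `U` uniform on `(0,1)` independent,
`Y = βX + σΦ⁻¹(U)` and `V = Φ((1-β²)X/σ - βΦ⁻¹(U))` are independent, with
`Y ~ N(0, σ²/(1-β²))` and `V` uniform on `(0,1)`. -/
theorem gaussian_rosenblatt_independence
    {Ω : Type*} [MeasurableSpace Ω] (P : Measure Ω) [IsProbabilityMeasure P]
    (β σ : ℝ) (hβ : |β| < 1) (hσ : 0 < σ)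
    (X U : Ω → ℝ) (hXm : Measurable X) (hUm : Measurable U)
    (hindep : IndepFun X U P)
    (hX : Measure.map X P = gaussianReal 0 (Real.toNNReal (σ ^ 2 / (1 - β ^ 2))))
    (hU : Measure.map U P = volume.restrict (Set.Ioo (0 : ℝ) 1))
    (Φ Φinv : ℝ → ℝ)
    (hΦ : Φ = fun t => cdf (gaussianReal 0 1) t)
    (hΦinv : (∀ t : ℝ, Φinv (Φ t) = t) ∧ ∀ u ∈ Set.Ioo (0 : ℝ) 1, Φ (Φinv u) = u) :
    IndepFun (fun ω => β * X ω + σ * Φinv (U ω))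
        (fun ω => Φ ((1 - β ^ 2) * X ω / σ - β * Φinv (U ω))) P ∧
    Measure.map (fun ω => β * X ω + σ * Φinv (U ω)) P =
      gaussianReal 0 (Real.toNNReal (σ ^ 2 / (1 - β ^ 2))) ∧
    Measure.map (fun ω => Φ ((1 - β ^ 2) * X ω / σ - β * Φinv (U ω))) P =
      volume.restrict (Set.Ioo (0 : ℝ) 1) :=
  gaussian_rosenblatt_independence_general P β σ hβ hσ X U hXm hUm hindep hX hU Φ Φinv hΦ hΦinv
end
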